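/- arXiv:1304.1641 — 2 statements merged into one kernel-verified Lean document; each statement's English description precedes it below -/
import Mathlib

section
/- Let X, Y, Z be pairwise q-commuting elements with relations YX = qXY, XZ = qZX, ZY = qYZ. Then the cyclic 4∼4 quantum dilogarithm identity holds: E(X)·E(XY)·E(Z)·E(Y) = E(Z)·E(ZX)·E(Y)·E(X) = E(Y)·E(YZ)·E(X)·E(Z), where E is the quantum exponential series. -/
/-!
Write `E` for `qexp` and `q` for `RatFunc.X`. For nilpotent `u`, `v` with `vu = q uv`, the
`q`-binomial theorem gives `E(u + v) = E(u) E(v)`, and the `q`-difference equation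
`E(qu) = (1 + u) E(u)` gives `v E(u) = E(u) (v + uv)`; together they yield the pentagon identity
`E(v) E(u) = E(u) E(uv) E(v)`. As `XY` commutes with `Z`, two pentagons give
`E(X)E(XY)E(Z)E(Y) = E(X)E(Z)E(XY)E(Y) = E(Z)E(ZX)E(X)E(XY)E(Y) = E(Z)E(ZX)E(Y)E(X)`,
and the second identity is the first one for the rotated triple `(Z, X, Y)`.
-/

/-- Coefficients of the quantum exponential series
`E(x) = ∑ (-x)^n / ((1-q)⋯(1-q^n))` with `q = RatFunc.X`. -/
noncomputable def qcoef (n : ℕ) : RatFunc ℚ :=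
  (-1 : RatFunc ℚ) ^ n / ∏ k ∈ Finset.range n, (1 - (RatFunc.X : RatFunc ℚ) ^ (k + 1))

/-- The quantum exponential of an element of a topological algebra over `ℚ(q)`. -/
noncomputable def qexp {A : Type*} [Ring A] [Algebra (RatFunc ℚ) A] [TopologicalSpace A]
    (x : A) : A :=
  ∑' n : ℕ, qcoef n • x ^ n

open Finset

local notation "q" => (RatFunc.X : RatFunc ℚ)

lemma RatFunc.X_pow_ne_one {K : Type*} [Field K] {n : ℕ} (hn : n ≠ 0) :
    (RatFunc.X : RatFunc K) ^ n ≠ 1 := by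
  rw [← RatFunc.algebraMap_X, ← map_pow, ← map_one (algebraMap (Polynomial K) (RatFunc K)),
    Ne, (RatFunc.algebraMap_injective K).eq_iff, ← sub_eq_zero, ← Polynomial.C_1]
  exact Polynomial.X_pow_sub_C_ne_zero (Nat.pos_of_ne_zero hn) 1

lemma one_sub_X_pow_succ_ne_zero (n : ℕ) : 1 - q ^ (n + 1) ≠ 0 :=
  sub_ne_zero.2 (RatFunc.X_pow_ne_one n.add_one_ne_zero).symm

lemma prod_one_sub_X_pow_succ_ne_zero (n : ℕ) : ∏ k ∈ range n, (1 - q ^ (k + 1)) ≠ 0 :=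
  prod_ne_zero_iff.2 fun k _ => one_sub_X_pow_succ_ne_zero k

lemma qcoef_ne_zero (n : ℕ) : qcoef n ≠ 0 :=
  div_ne_zero (pow_ne_zero _ (neg_ne_zero.2 one_ne_zero)) (prod_one_sub_X_pow_succ_ne_zero n)

lemma qcoef_zero : qcoef 0 = 1 := by
  simp [qcoef]

lemma X_pow_sub_one_mul_qcoef_succ (n : ℕ) : (q ^ (n + 1) - 1) * qcoef (n + 1) = qcoef n := by
  have := one_sub_X_pow_succ_ne_zero n
  have := prod_one_sub_X_pow_succ_ne_zero n
  rw [qcoef, qcoef, prod_range_succ]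
  field_simp
  ring

lemma sum_range_add_sum_antidiagonal_eq_sum_range_sum_range {M : Type*} [AddCommMonoid M]
    {m n : ℕ} (f : ℕ → ℕ → M) (hf : ∀ i j, m ≤ i ∨ n ≤ j → f i j = 0) :
    ∑ k ∈ range (m + n), ∑ p ∈ antidiagonal k, f p.1 p.2 =
      ∑ i ∈ range m, ∑ j ∈ range n, f i j := by
  rw [sum_sigma', ← sum_product']
  refine sum_bij_ne_zero (fun x _ _ => x.2) ?_ ?_ ?_ ?_
  · rintro ⟨k, i, j⟩ - hne
    simp only [mem_product, mem_range]
    by_contra hij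
    exact hne (hf i j (by omega))
  · rintro ⟨k, i, j⟩ hk - ⟨k', i', j'⟩ hk' - hij
    simp only [mem_sigma, HasAntidiagonal.mem_antidiagonal] at hk hk'
    simp only [Prod.mk.injEq] at hij
    obtain ⟨rfl, rfl⟩ := hij
    obtain rfl : k = k' := hk.2.symm.trans hk'.2
    rfl
  · rintro ⟨i, j⟩ hij hne
    simp only [mem_product, mem_range] at hij
    refine ⟨⟨i + j, i, j⟩, ?_, hne, rfl⟩
    simpa using add_lt_add hij.1 hij.2
  · intros
    rfl

section QCommuting

variable {A : Type*} [Ring A] [Algebra (RatFunc ℚ) A] {u v : A}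

lemma pow_mul_of_qcomm (h : v * u = q • (u * v)) (n : ℕ) :
    v ^ n * u = q ^ n • (u * v ^ n) := by
  induction n with
  | zero => simp
  | succ n ih =>
    rw [pow_succ, mul_assoc, h, mul_smul_comm, ← mul_assoc, ih, smul_mul_assoc, smul_smul,
      mul_assoc, ← pow_succ, ← pow_succ']

lemma mul_pow_of_qcomm (h : v * u = q • (u * v)) (n : ℕ) :
    (u * v) ^ n = q ^ n.choose 2 • (u ^ n * v ^ n) := by
  induction n with
  | zero => simp
  | succ n ih =>
    rw [pow_succ, ih, smul_mul_assoc, mul_assoc, ← mul_assoc (v ^ n), pow_mul_of_qcomm h,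
      smul_mul_assoc, mul_smul_comm, smul_smul, ← pow_add, Nat.choose_succ_succ',
      Nat.choose_one_right, add_comm n, mul_assoc u, ← pow_succ, ← mul_assoc, ← pow_succ]

lemma IsNilpotent.mul_of_qcomm (h : v * u = q • (u * v)) (hu : IsNilpotent u) :
    IsNilpotent (u * v) := by
  obtain ⟨n, hn⟩ := hu
  exact ⟨n, by rw [mul_pow_of_qcomm h, hn, zero_mul, smul_zero]⟩

/-- The `q`-binomial theorem. -/
theorem qcoef_smul_add_pow_of_qcomm (h : v * u = q • (u * v)) (n : ℕ) :
    qcoef n • (u + v) ^ n =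
      ∑ p ∈ antidiagonal n, (qcoef p.1 * qcoef p.2) • (u ^ p.1 * v ^ p.2) := by
  induction n with
  | zero => simp [qcoef_zero]
  | succ n ih =>
    apply smul_right_injective A (sub_ne_zero.2 (RatFunc.X_pow_ne_one (K := ℚ) n.add_one_ne_zero))
    -- `q^(i+j) - 1 = q^j (q^i - 1) + (q^j - 1)`: the `q`-Pascal rule
    have pascal : ∀ p ∈ antidiagonal (n + 1),
        (q ^ (n + 1) - 1) • (qcoef p.1 * qcoef p.2) • (u ^ p.1 * v ^ p.2) =
          (q ^ p.2 * ((q ^ p.1 - 1) * qcoef p.1) * qcoef p.2) • (u ^ p.1 * v ^ p.2) +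
          (qcoef p.1 * ((q ^ p.2 - 1) * qcoef p.2)) • (u ^ p.1 * v ^ p.2) := by
      intro p hp
      rw [HasAntidiagonal.mem_antidiagonal] at hp
      rw [smul_smul, ← add_smul, ← hp, pow_add]
      ring_nf
    dsimp only
    rw [smul_sum, sum_congr rfl pascal, sum_add_distrib, Nat.sum_antidiagonal_succ,
      Nat.sum_antidiagonal_succ', smul_smul, X_pow_sub_one_mul_qcoef_succ, pow_succ,
      ← smul_mul_assoc, ih, mul_add, sum_mul, sum_mul]
    simp only [pow_zero, sub_self, zero_mul, mul_zero, zero_smul, zero_add,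
      X_pow_sub_one_mul_qcoef_succ]
    congr 1 <;> refine sum_congr rfl fun p _ => ?_
    · rw [smul_mul_assoc, mul_assoc, pow_mul_of_qcomm h, mul_smul_comm, smul_smul, ← mul_assoc,
        ← pow_succ]
      ring_nf
    · rw [smul_mul_assoc, mul_assoc, ← pow_succ]

lemma add_pow_eq_zero_of_qcomm (h : v * u = q • (u * v)) {m n : ℕ} (hu : u ^ m = 0)
    (hv : v ^ n = 0) : (u + v) ^ (m + n) = 0 := by
  refine smul_right_injective A (qcoef_ne_zero (m + n)) ?_
  simp only [smul_zero]
  rw [qcoef_smul_add_pow_of_qcomm h]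
  refine sum_eq_zero fun p hp => ?_
  rw [HasAntidiagonal.mem_antidiagonal] at hp
  rcases le_or_gt m p.1 with hp1 | hp1
  · rw [pow_eq_zero_of_le hp1 hu, zero_mul, smul_zero]
  · rw [pow_eq_zero_of_le (by omega) hv, mul_zero, smul_zero]

lemma IsNilpotent.add_of_qcomm (h : v * u = q • (u * v)) (hu : IsNilpotent u)
    (hv : IsNilpotent v) : IsNilpotent (u + v) := by
  obtain ⟨m, hm⟩ := hu
  obtain ⟨n, hn⟩ := hv
  exact ⟨m + n, add_pow_eq_zero_of_qcomm h hm hn⟩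

lemma commute_mul_of_qcomm {x y z : A} (hxz : x * z = q • (z * x)) (hzy : z * y = q • (y * z)) :
    Commute (x * y) z := by
  refine smul_right_injective A (RatFunc.X_ne_zero (K := ℚ)) ?_
  calc q • (x * y * z) = x * (z * y) := by rw [hzy, mul_smul_comm, mul_assoc]
    _ = q • (z * (x * y)) := by rw [← mul_assoc, hxz, smul_mul_assoc, mul_assoc]

end QCommuting

section QExp

variable {A : Type*} [Ring A] [Algebra (RatFunc ℚ) A] [TopologicalSpace A]

lemma qexp_eq_sum_range {x : A} {N : ℕ} (hx : x ^ N = 0) :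
    qexp x = ∑ n ∈ range N, qcoef n • x ^ n :=
  tsum_eq_sum fun n hn => by rw [pow_eq_zero_of_le (by simpa using hn) hx, smul_zero]

lemma SemiconjBy.qexp {a x y : A} (h : SemiconjBy a x y) (hx : IsNilpotent x)
    (hy : IsNilpotent y) : SemiconjBy a (qexp x) (qexp y) := by
  obtain ⟨m, hm⟩ := hx
  obtain ⟨n, hn⟩ := hy
  rw [SemiconjBy, qexp_eq_sum_range (pow_eq_zero_of_le (le_max_left m n) hm),
    qexp_eq_sum_range (pow_eq_zero_of_le (le_max_right m n) hn), mul_sum, sum_mul]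
  refine sum_congr rfl fun k _ => ?_
  rw [mul_smul_comm, smul_mul_assoc, (h.pow_right k).eq]

lemma Commute.qexp {a b : A} (h : Commute a b) (ha : IsNilpotent a) (hb : IsNilpotent b) :
    Commute (qexp a) (qexp b) :=
  (SemiconjBy.qexp (Commute.symm (SemiconjBy.qexp h hb hb)) ha ha).symm

lemma qexp_add_of_qcomm {u v : A} (h : v * u = q • (u * v)) (hu : IsNilpotent u)
    (hv : IsNilpotent v) : qexp (u + v) = qexp u * qexp v := by
  obtain ⟨m, hm⟩ := hu
  obtain ⟨n, hn⟩ := hv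
  rw [qexp_eq_sum_range (add_pow_eq_zero_of_qcomm h hm hn), qexp_eq_sum_range hm,
    qexp_eq_sum_range hn, sum_mul_sum]
  simp_rw [qcoef_smul_add_pow_of_qcomm h, smul_mul_smul_comm]
  refine sum_range_add_sum_antidiagonal_eq_sum_range_sum_range
    (fun i j => (qcoef i * qcoef j) • (u ^ i * v ^ j)) ?_
  rintro i j (hi | hj)
  · rw [pow_eq_zero_of_le hi hm, zero_mul, smul_zero]
  · rw [pow_eq_zero_of_le hj hn, mul_zero, smul_zero]

lemma qexp_X_smul {x : A} (hx : IsNilpotent x) : qexp (q • x) = (1 + x) * qexp x := by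
  obtain ⟨N, hN⟩ := hx
  have hN' : x ^ (N + 1) = 0 := pow_eq_zero_of_le N.le_succ hN
  rw [qexp_eq_sum_range (by rw [smul_pow, hN', smul_zero]), qexp_eq_sum_range hN', add_mul,
    one_mul, mul_sum, sum_range_succ (fun n => x * (qcoef n • x ^ n)) N, hN, smul_zero, mul_zero,
    add_zero]
  have hshift : ∀ n ∈ range (N + 1), qcoef n • (q • x) ^ n =
      qcoef n • x ^ n + ((q ^ n - 1) * qcoef n) • x ^ n := by
    intro n _
    rw [smul_pow, smul_smul, ← add_smul]
    ring_nf
  rw [sum_congr rfl hshift, sum_add_distrib,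
    sum_range_succ' (fun n => ((q ^ n - 1) * qcoef n) • x ^ n) N]
  simp only [pow_zero, sub_self, zero_mul, zero_smul, add_zero, X_pow_sub_one_mul_qcoef_succ]
  exact congrArg _ (sum_congr rfl fun n _ => by rw [pow_succ', mul_smul_comm])

theorem qexp_pentagon {u v : A} (h : v * u = q • (u * v)) (hu : IsNilpotent u)
    (hv : IsNilpotent v) : qexp v * qexp u = qexp u * qexp (u * v) * qexp v := by
  have huv : IsNilpotent (u * v) := hu.mul_of_qcomm h
  have h' : v * (u * v) = q • (u * v * v) := by rw [← mul_assoc, h, smul_mul_assoc]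
  have hvu : SemiconjBy v u (q • u) := by rw [SemiconjBy, h, smul_mul_assoc]
  have hconj : SemiconjBy (qexp u) (v + u * v) v := by
    have hcomm : Commute u (qexp u) := SemiconjBy.qexp (Commute.refl u) hu hu
    rw [SemiconjBy, eq_comm]
    calc v * qexp u = qexp (q • u) * v := (hvu.qexp hu (hu.smul q)).eq
      _ = (1 + u) * qexp u * v := by rw [qexp_X_smul hu]
      _ = qexp u * (v + u * v) := by
        rw [add_mul, one_mul, hcomm.eq, add_mul, mul_assoc, mul_add]
  have hsum : IsNilpotent (v + u * v) := by
    rw [add_comm]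
    exact huv.add_of_qcomm h' hv
  calc qexp v * qexp u = qexp u * qexp (v + u * v) := (hconj.qexp hsum hv).eq.symm
    _ = qexp u * qexp (u * v) * qexp v := by
      rw [add_comm, qexp_add_of_qcomm h' huv hv, mul_assoc]

theorem qexp_four_four_rotate {X Y Z : A} (hYX : Y * X = q • (X * Y))
    (hXZ : X * Z = q • (Z * X)) (hZY : Z * Y = q • (Y * Z)) (hX : IsNilpotent X)
    (hY : IsNilpotent Y) (hZ : IsNilpotent Z) :
    qexp X * qexp (X * Y) * qexp Z * qexp Y = qexp Z * qexp (Z * X) * qexp Y * qexp X := by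
  have hcomm : Commute (qexp (X * Y)) (qexp Z) :=
    (commute_mul_of_qcomm hXZ hZY).qexp (hX.mul_of_qcomm hYX) hZ
  calc qexp X * qexp (X * Y) * qexp Z * qexp Y
      = qexp X * qexp Z * qexp (X * Y) * qexp Y := by
        rw [mul_assoc (qexp X), hcomm.eq, ← mul_assoc]
    _ = qexp Z * qexp (Z * X) * (qexp X * qexp (X * Y) * qexp Y) := by
      rw [qexp_pentagon hXZ hZ hX]
      simp only [mul_assoc]
    _ = qexp Z * qexp (Z * X) * qexp Y * qexp X := by
      rw [← qexp_pentagon hYX hX hY]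
      simp only [mul_assoc]

end QExp

theorem qexp_cyclic_four_four_general {A : Type*} [Ring A] [Algebra (RatFunc ℚ) A]
    [TopologicalSpace A] (X Y Z : A)
    (hYX : Y * X = (RatFunc.X : RatFunc ℚ) • (X * Y))
    (hXZ : X * Z = (RatFunc.X : RatFunc ℚ) • (Z * X))
    (hZY : Z * Y = (RatFunc.X : RatFunc ℚ) • (Y * Z))
    (hX : IsNilpotent X) (hY : IsNilpotent Y) (hZ : IsNilpotent Z) :
    qexp X * qexp (X * Y) * qexp Z * qexp Y = qexp Z * qexp (Z * X) * qexp Y * qexp X ∧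
    qexp Z * qexp (Z * X) * qexp Y * qexp X = qexp Y * qexp (Y * Z) * qexp X * qexp Z :=
  ⟨qexp_four_four_rotate hYX hXZ hZY hX hY hZ, qexp_four_four_rotate hXZ hZY hYX hZ hX hY⟩

/-- The cyclic `4 ∼ 4` quantum dilogarithm identity: for pairwise `q`-commuting
(nilpotent) `X`, `Y`, `Z` with `YX = qXY`, `XZ = qZX`, `ZY = qYZ`,
`E(X)E(XY)E(Z)E(Y) = E(Z)E(ZX)E(Y)E(X) = E(Y)E(YZ)E(X)E(Z)`. -/
theorem qexp_cyclic_four_four {A : Type*} [Ring A] [Algebra (RatFunc ℚ) A]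
    [TopologicalSpace A] [T2Space A] (X Y Z : A)
    (hYX : Y * X = (RatFunc.X : RatFunc ℚ) • (X * Y))
    (hXZ : X * Z = (RatFunc.X : RatFunc ℚ) • (Z * X))
    (hZY : Z * Y = (RatFunc.X : RatFunc ℚ) • (Y * Z))
    (hX : IsNilpotent X) (hY : IsNilpotent Y) (hZ : IsNilpotent Z) :
    qexp X * qexp (X * Y) * qexp Z * qexp Y = qexp Z * qexp (Z * X) * qexp Y * qexp X ∧
    qexp Z * qexp (Z * X) * qexp Y * qexp X = qexp Y * qexp (Y * Z) * qexp X * qexp Z :=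
  qexp_cyclic_four_four_general X Y Z hYX hXZ hZY hX hY hZ
end

section
/- If α and α' are two integer vectors in the kernel of the incidence matrix B of Q_N and α_{1j} = α'_{1j} for j = 2, ..., χ(N)+1 (where χ(N) = N/2 for even N and (N−1)/2 for odd N), then α = α'. That is, an element of ker B is uniquely determined by its values on the first χ(N) vertices of the top boundary row. -/
/-- Entry `B_{v,w}` of the skew-symmetric incidence matrix of the triangular quiver
`Q_N`: edges go `(i,j)→(i,j+1)`, `(i,j)→(i+1,j)` and `(i+1,j+1)→(i,j)`. -/
def Bfun (v w : ℕ × ℕ) : ℤ :=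
  if (w = (v.1, v.2 + 1) ∨ w = (v.1 + 1, v.2) ∨ v = (w.1 + 1, w.2 + 1)) then 1
  else if (v = (w.1, w.2 + 1) ∨ v = (w.1 + 1, w.2) ∨ w = (v.1 + 1, v.2 + 1)) then -1
  else 0

/-- The vertex set of the quiver `Q_N`: pairs `(i,j)` with `1 ≤ i < j ≤ N`. -/
def vertexSet (N : ℕ) : Finset (ℕ × ℕ) :=
  (Finset.Icc 1 N ×ˢ Finset.Icc 1 N).filter fun p => p.1 < p.2

/-- `χ(N) = N/2` for even `N` and `(N-1)/2` for odd `N`. -/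
def chiN (N : ℕ) : ℕ := if N % 2 = 0 then N / 2 else (N - 1) / 2

/-!
Extend the difference `β = α - α'` by zero and let `F n = ∑_{k ≤ n} β(1,k)`. The kernel relation
at a vertex is a hexagon relation among its six neighbours, which any function of `i`, of `j` or
of `j - i` alone satisfies. Solving it outward from the top row gives
`β(i,j) = F j - F (j - i) - F i` on the whole closed triangle `0 ≤ i ≤ j ≤ N + 1`, including the
column `j = N + 1` outside `Q_N`. There `β` vanishes, so `F i + F (N + 1 - i) = F (N + 1)`. As
`F` vanishes up to `χ(N) + 1 ≥ (N + 1) / 2`, this symmetry forces `F = 0` on `[0, N + 1]`.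
-/

lemma mem_vertexSet {N a b : ℕ} : (a, b) ∈ vertexSet N ↔ 1 ≤ a ∧ a < b ∧ b ≤ N := by
  simp only [vertexSet, Finset.mem_filter, Finset.mem_product, Finset.mem_Icc]
  omega

lemma add_one_le_two_mul_chiN_add_one (N : ℕ) : N + 1 ≤ 2 * (chiN N + 1) := by
  unfold chiN
  split <;> omega

lemma eq_zero_of_add_eq_of_eq_zero {M : Type*} [AddZeroClass M] {F : ℕ → M} {m c : ℕ}
    (hsymm : ∀ i d, i + d = m → F i + F d = F m) (hzero : ∀ k ≤ c, F k = 0) (hmc : m ≤ 2 * c) :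
    ∀ k ≤ m, F k = 0 := by
  have hm : F m = 0 := by
    rw [← hsymm (min c m) (m - min c m) (by omega), hzero _ (min_le_left c m),
      hzero _ (by omega), add_zero]
  intro k hk
  by_cases hkc : k ≤ c
  · exact hzero k hkc
  · calc F k = F k + F (m - k) := by rw [hzero (m - k) (by omega), add_zero]
      _ = F m := hsymm k (m - k) (by omega)
      _ = 0 := hm

section KernelVector

variable {N : ℕ} {β : ℕ × ℕ → ℤ}

lemma sum_Bfun_succ_succ_mul (hsupp : ∀ p ∉ vertexSet N, β p = 0) (i j : ℕ) :
    ∑ w ∈ vertexSet N, Bfun (i + 1, j + 1) w * β w =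
      β (i + 1, j + 2) + β (i + 2, j + 1) + β (i, j)
        - β (i + 1, j) - β (i, j + 1) - β (i + 2, j + 2) := by
  have hB : ∀ w, Bfun (i + 1, j + 1) w =
      (if w = (i + 1, j + 2) then (1 : ℤ) else 0) + (if w = (i + 2, j + 1) then 1 else 0)
        + (if w = (i, j) then 1 else 0) - (if w = (i + 1, j) then 1 else 0)
        - (if w = (i, j + 1) then 1 else 0) - (if w = (i + 2, j + 2) then 1 else 0) := by
    rintro ⟨x, y⟩
    simp only [Bfun, Prod.mk.injEq]
    split_ifs <;> omega
  have hext : ∀ p, (if p ∈ vertexSet N then β p else 0) = β p := fun p => by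
    split_ifs with hp
    · rfl
    · exact (hsupp p hp).symm
  simp only [hB, add_mul, sub_mul, ite_mul, one_mul, zero_mul, Finset.sum_add_distrib,
    Finset.sum_sub_distrib, Finset.sum_ite_eq', hext]

def topRowSum (β : ℕ × ℕ → ℤ) (n : ℕ) : ℤ := ∑ k ∈ Finset.range (n + 1), β (1, k)

lemma topRowSum_succ (β : ℕ × ℕ → ℤ) (n : ℕ) :
    topRowSum β (n + 1) = topRowSum β n + β (1, n + 1) :=
  Finset.sum_range_succ _ _

lemma eq_topRowSum_sub (hsupp : ∀ p ∉ vertexSet N, β p = 0)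
    (hker : ∀ v ∈ vertexSet N, ∑ w ∈ vertexSet N, Bfun v w * β w = 0)
    (i d : ℕ) (h : i + d ≤ N + 1) :
    β (i, i + d) = topRowSum β (i + d) - topRowSum β d - topRowSum β i := by
  have hzero : ∀ a b, ¬ (1 ≤ a ∧ a < b ∧ b ≤ N) → β (a, b) = 0 :=
    fun a b hab => hsupp _ (mt mem_vertexSet.1 hab)
  have hF0 : topRowSum β 0 = 0 := by simp [topRowSum, hzero 1 0]
  have hF1 : topRowSum β 1 = 0 := by simp [topRowSum, Finset.sum_range_succ, hzero 1 0, hzero 1 1]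
  induction hn : 2 * i + d using Nat.strong_induction_on generalizing i d with
  | _ n ih =>
  match i, d with
  | 0, d => simp [hzero 0 d, hF0]
  | 1, d =>
    rw [add_comm 1 d, topRowSum_succ, hF1]
    ring
  | i + 2, 0 => simp [hzero (i + 2) (i + 2), hF0]
  | i + 2, d + 1 =>
    have hhex := sum_Bfun_succ_succ_mul hsupp i (i + d + 1)
    rw [hker _ (mem_vertexSet.2 (by omega))] at hhex
    have e1 := ih _ (by omega) (i + 1) (d + 2) (by omega) rfl
    have e2 := ih _ (by omega) (i + 2) d (by omega) rfl
    have e3 := ih _ (by omega) i (d + 1) (by omega) rfl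
    have e4 := ih _ (by omega) (i + 1) d (by omega) rfl
    have e5 := ih _ (by omega) i (d + 2) (by omega) rfl
    ring_nf at hhex e1 e2 e3 e4 e5 ⊢
    linear_combination hhex + e1 + e2 + e3 - e4 - e5

lemma topRowSum_add_topRowSum (hsupp : ∀ p ∉ vertexSet N, β p = 0)
    (hker : ∀ v ∈ vertexSet N, ∑ w ∈ vertexSet N, Bfun v w * β w = 0)
    (i d : ℕ) (h : i + d = N + 1) :
    topRowSum β i + topRowSum β d = topRowSum β (N + 1) := by
  have hout : β (i, i + d) = 0 := hsupp _ (by rw [mem_vertexSet]; omega)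
  rw [eq_topRowSum_sub hsupp hker i d h.le, h] at hout
  linear_combination -hout

lemma eq_zero_of_top_row_eq_zero (hsupp : ∀ p ∉ vertexSet N, β p = 0)
    (hker : ∀ v ∈ vertexSet N, ∑ w ∈ vertexSet N, Bfun v w * β w = 0)
    (htop : ∀ j, 2 ≤ j → j ≤ chiN N + 1 → β (1, j) = 0) : β = 0 := by
  have hF0 : ∀ k ≤ chiN N + 1, topRowSum β k = 0 := fun k hk =>
    Finset.sum_eq_zero fun l hl => by
      rw [Finset.mem_range] at hl
      by_cases hl2 : 2 ≤ l
      · exact htop l hl2 (by omega)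
      · exact hsupp _ (by rw [mem_vertexSet]; omega)
  have hF := eq_zero_of_add_eq_of_eq_zero (topRowSum_add_topRowSum hsupp hker) hF0
    (add_one_le_two_mul_chiN_add_one N)
  funext ⟨i, j⟩
  by_cases hv : (i, j) ∈ vertexSet N
  · obtain ⟨-, hij, hj⟩ := mem_vertexSet.1 hv
    obtain ⟨d, rfl⟩ : ∃ d, j = i + d := ⟨j - i, by omega⟩
    rw [eq_topRowSum_sub hsupp hker i d (by omega), hF _ (by omega), hF _ (by omega),
      hF _ (by omega), Pi.zero_apply, sub_zero, sub_zero]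
  · exact hsupp _ hv

end KernelVector

theorem ker_B_determined_by_boundary_general (N : ℕ) (α α' : ℕ × ℕ → ℤ)
    (hker : ∀ v ∈ vertexSet N, ∑ w ∈ vertexSet N, Bfun v w * α w = 0)
    (hker' : ∀ v ∈ vertexSet N, ∑ w ∈ vertexSet N, Bfun v w * α' w = 0)
    (hagree : ∀ j : ℕ, 2 ≤ j → j ≤ chiN N + 1 → α (1, j) = α' (1, j)) :
    ∀ v ∈ vertexSet N, α v = α' v := by
  set β : ℕ × ℕ → ℤ := fun p => if p ∈ vertexSet N then α p - α' p else 0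
  have hkerβ : ∀ v ∈ vertexSet N, ∑ w ∈ vertexSet N, Bfun v w * β w = 0 := fun v hv =>
    calc ∑ w ∈ vertexSet N, Bfun v w * β w
        = ∑ w ∈ vertexSet N, (Bfun v w * α w - Bfun v w * α' w) :=
          Finset.sum_congr rfl fun w hw => by simp only [β, if_pos hw, mul_sub]
      _ = 0 := by rw [Finset.sum_sub_distrib, hker v hv, hker' v hv, sub_zero]
  have htop : ∀ j, 2 ≤ j → j ≤ chiN N + 1 → β (1, j) = 0 := fun j h2 hj => by
    simp only [β]
    split_ifs
    · rw [hagree j h2 hj, sub_self]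
    · rfl
  have hβ := eq_zero_of_top_row_eq_zero (fun p hp => if_neg hp) hkerβ htop
  intro v hv
  simpa [β, hv, sub_eq_zero] using congr_fun hβ v

/-- An element of `ker B` is uniquely determined by its values on the vertices
`(1,j)`, `j = 2, …, χ(N)+1`, of the top boundary row of `Q_N`. -/
theorem ker_B_determined_by_boundary (N : ℕ) (hN : 2 ≤ N) (α α' : ℕ × ℕ → ℤ)
    (hker : ∀ v ∈ vertexSet N, ∑ w ∈ vertexSet N, Bfun v w * α w = 0)
    (hker' : ∀ v ∈ vertexSet N, ∑ w ∈ vertexSet N, Bfun v w * α' w = 0)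
    (hagree : ∀ j : ℕ, 2 ≤ j → j ≤ chiN N + 1 → α (1, j) = α' (1, j)) :
    ∀ v ∈ vertexSet N, α v = α' v :=
  ker_B_determined_by_boundary_general N α α' hker hker' hagree
end
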